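/- For fixed constants 0 < s < d, with high probability as n → ∞ the random graph G(n, 1/4) satisfies: minimum degree ≥ n/5 and every pair of distinct vertices has at most 3n/20 common neighbors; hence every non-identity automorphism of G(n,1/4) moves at least n/20 vertices, with high probability. -/

import Mathlib

open MeasureTheory Filter

abbrev EdgeIdx (n : ℕ) := {e : Sym2 (Fin n) // ¬ e.IsDiag}

noncomputable def erMeasure (n : ℕ) : Measure (EdgeIdx n → Bool) :=
  Measure.pi fun _ => (PMF.bernoulli (1/4) (by norm_num [div_le_one])).toMeasure

def graphOf {n : ℕ} (ω : EdgeIdx n → Bool) : SimpleGraph (Fin n) where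
  Adj u v := ∃ h : u ≠ v, ω ⟨s(u,v), fun hd => h (Sym2.mk_isDiag_iff.mp hd)⟩ = true
  symm := by
    constructor
    rintro u v ⟨h, hw⟩
    refine ⟨h.symm, ?_⟩
    have he : (⟨s(v,u), fun hd => h.symm (Sym2.mk_isDiag_iff.mp hd)⟩ : EdgeIdx n)
        = ⟨s(u,v), fun hd => h (Sym2.mk_isDiag_iff.mp hd)⟩ := Subtype.ext (Sym2.eq_swap)
    rw [he]; exact hw
  loopless := by constructor; rintro v ⟨h, _⟩; exact h rfl

open Topology
open scoped ENNReal NNReal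

/-!
For a random set `R ⊆ U` with `P(S ⊆ R) = p ^ #S` for all `S ⊆ U`, expanding
`(1 + t) ^ #R = ∑ S ⊆ R, t ^ #S` gives `E (1 + t) ^ #R = (1 + t p) ^ #U`, and Markov's inequality
turns this into a Chernoff bound on `P(k ≤ #R)`. In `G(n, 1/4)` the non-neighbours of a vertex
(`p = 3/4`) and the common neighbours of two vertices (`p = 1/16`) are such random sets, because
distinct vertex pairs are distinct, independent edges. Degree below `n/5` means at least `4n/5`
non-neighbours against a mean of `3n/4`; codegree above `3n/20` is far above the mean `n/16`.
Both bounds decay geometrically, so they survive the union bounds over vertices and pairs.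
Outside these events an automorphism `f` with `f x ≠ x` moves every neighbour of `x` that is not
a neighbour of `f x`, hence at least `n/5 - 3n/20 = n/20` vertices.
-/

theorem lintegral_pow_card_eq {Ω α : Type*} [MeasurableSpace Ω] [DiscreteMeasurableSpace Ω]
    {μ : Measure Ω} {U : Finset α} {R : Ω → Finset α} (hRU : ∀ ω, R ω ⊆ U) {p : ℝ≥0∞}
    (hp : ∀ S ⊆ U, μ {ω | S ⊆ R ω} = p ^ S.card) (t : ℝ≥0∞) :
    ∫⁻ ω, (1 + t) ^ (R ω).card ∂μ = (1 + t * p) ^ U.card := by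
  classical
  have hsum (ω : Ω) : (1 + t) ^ (R ω).card
      = ∑ S ∈ U.powerset, {ω | S ⊆ R ω}.indicator (fun _ => t ^ S.card) ω := by
    have : U.powerset.filter (· ⊆ R ω) = (R ω).powerset := by
      ext S; simpa using fun h => h.trans (hRU ω)
    simp only [Set.indicator_apply, Set.mem_ofPred_eq, ← Finset.sum_filter, this]
    simp [add_comm, ← Finset.sum_pow_mul_eq_add_pow]
  simp_rw [hsum]
  rw [lintegral_finsetSum _ fun S _ => Measurable.of_discrete, add_comm,
    ← Finset.sum_pow_mul_eq_add_pow]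
  refine Finset.sum_congr rfl fun S hS => ?_
  rw [lintegral_indicator_const MeasurableSet.of_discrete, hp S (Finset.mem_powerset.mp hS)]
  simp [mul_pow]

theorem measure_card_ge_le {Ω α : Type*} [MeasurableSpace Ω] [DiscreteMeasurableSpace Ω]
    {μ : Measure Ω} {U : Finset α} {R : Ω → Finset α} (hRU : ∀ ω, R ω ⊆ U) {p : ℝ≥0}
    (hp : ∀ S ⊆ U, μ {ω | S ⊆ R ω} = (p : ℝ≥0∞) ^ S.card) (t : ℝ≥0) (k : ℕ) :
    μ {ω | k ≤ (R ω).card} ≤ ((1 + t * p) ^ U.card * (1 + t)⁻¹ ^ k : ℝ≥0) := by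
  have hmarkov : ((1 + t : ℝ≥0) : ℝ≥0∞) ^ k * μ {ω | k ≤ (R ω).card}
      ≤ ∫⁻ ω, (1 + (t : ℝ≥0∞)) ^ (R ω).card ∂μ := by
    push_cast
    calc (1 + (t : ℝ≥0∞)) ^ k * μ {ω | k ≤ (R ω).card}
        ≤ (1 + (t : ℝ≥0∞)) ^ k * μ {ω | (1 + (t : ℝ≥0∞)) ^ k ≤ (1 + t) ^ (R ω).card} := by
          gcongr; exact pow_le_pow_right₀ le_self_add
      _ ≤ ∫⁻ ω, (1 + (t : ℝ≥0∞)) ^ (R ω).card ∂μ :=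
          mul_meas_ge_le_lintegral₀ Measurable.of_discrete.aemeasurable _
  rw [lintegral_pow_card_eq hRU hp] at hmarkov
  rw [ENNReal.coe_mul, ENNReal.coe_pow, ENNReal.coe_pow, ENNReal.coe_inv (by positivity),
    ← ENNReal.inv_pow, ← div_eq_mul_inv, ENNReal.le_div_iff_mul_le (by simp) (by simp), mul_comm]
  simpa using hmarkov

theorem measure_setOf_exists_le {Ω ι : Type*} [MeasurableSpace Ω] [Fintype ι] (μ : Measure Ω)
    {P : ι → Ω → Prop} {c : ℝ≥0∞} (h : ∀ i, μ {ω | P i ω} ≤ c) :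
    μ {ω | ∃ i, P i ω} ≤ Fintype.card ι * c := by
  rw [Set.ofPred_exists, ← nsmul_eq_mul]
  exact (measure_iUnion_fintype_le μ _).trans (Finset.sum_le_card_nsmul _ _ _ fun i _ => h i)

theorem tendsto_measure_nhds_one_of_compl {Ω : ℕ → Type*} [∀ n, MeasurableSpace (Ω n)]
    {μ : ∀ n, Measure (Ω n)} [∀ n, IsProbabilityMeasure (μ n)] {s : ∀ n, Set (Ω n)}
    (hs : ∀ n, MeasurableSet (s n)) (h : Tendsto (fun n => μ n (s n)ᶜ) atTop (𝓝 0)) :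
    Tendsto (fun n => μ n (s n)) atTop (𝓝 1) := by
  have hcompl (n : ℕ) : μ n (s n) = 1 - μ n (s n)ᶜ := by
    rw [prob_compl_eq_one_sub (hs n), ENNReal.sub_sub_cancel ENNReal.one_ne_top prob_le_one]
  simpa [hcompl] using ENNReal.Tendsto.sub tendsto_const_nhds h (Or.inl ENNReal.one_ne_top)

/-- The `L`-th power lets the bound absorb floor divisions such as `4 * n / 5` in exponents. -/
theorem tendsto_nhds_zero_of_pow_le {f : ℕ → ℝ≥0} {L k : ℕ} (hL : L ≠ 0) {C r : ℝ≥0}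
    (hr : r < 1) (h : ∀ n, f n ^ L ≤ C * n ^ k * r ^ n) : Tendsto f atTop (𝓝 0) := by
  have hgeom : Tendsto (fun n : ℕ => C * n ^ k * r ^ n) atTop (𝓝 0) := by
    rw [← NNReal.tendsto_coe]
    have := (tendsto_pow_const_mul_const_pow_of_abs_lt_one k
      (by rwa [NNReal.abs_eq, NNReal.coe_lt_one] : |(r : ℝ)| < 1)).const_mul (C : ℝ)
    simpa [mul_assoc] using this
  have hpow : Tendsto (fun n => f n ^ L) atTop (𝓝 0) :=
    tendsto_of_tendsto_of_tendsto_of_le_of_le tendsto_const_nhds hgeom (fun _ => zero_le) h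
  have hroot := ((NNReal.continuous_rpow_const (inv_nonneg.mpr (Nat.cast_nonneg L))).tendsto 0).comp
    hpow
  simpa [Function.comp_def, NNReal.pow_rpow_inv_natCast _ hL, hL] using hroot

theorem SimpleGraph.neighborSet_subset_union_commonNeighbors {V : Type*} {G : SimpleGraph V}
    (f : G ≃g G) (x : V) : G.neighborSet x ⊆ {v | f v ≠ v} ∪ G.commonNeighbors x (f x) := by
  intro w hw
  by_cases hfw : f w = w
  · refine Or.inr ⟨hw, ?_⟩
    simpa [hfw] using f.map_adj_iff.mpr hw
  · exact Or.inl hfw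

theorem SimpleGraph.sub_le_card_support {V : Type*} [Fintype V] [DecidableEq V]
    {G : SimpleGraph V} {d s : ℝ} (hdeg : ∀ v, d ≤ (G.neighborSet v).ncard)
    (hcodeg : ∀ x y, x ≠ y → ((G.commonNeighbors x y).ncard : ℝ) ≤ s)
    (f : G ≃g G) {x : V} (hx : f x ≠ x) : d - s ≤ (Equiv.Perm.support f.toEquiv).card := by
  have hcard : (G.neighborSet x).ncard ≤ (Equiv.Perm.support f.toEquiv).card
      + (G.commonNeighbors x (f x)).ncard := by
    calc (G.neighborSet x).ncard ≤ ({v | f v ≠ v} ∪ G.commonNeighbors x (f x)).ncard :=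
          Set.ncard_le_ncard (G.neighborSet_subset_union_commonNeighbors f x)
      _ ≤ {v | f v ≠ v}.ncard + (G.commonNeighbors x (f x)).ncard := Set.ncard_union_le _ _
      _ = _ := by rw [← Set.ncard_coe_finset, Equiv.Perm.coe_support_eq_set_support]; rfl
  have hcard_real : ((G.neighborSet x).ncard : ℝ) ≤ (Equiv.Perm.support f.toEquiv).card
      + (G.commonNeighbors x (f x)).ncard := by exact_mod_cast hcard
  linarith [hdeg x, hcodeg x (f x) hx.symm]

instance (n : ℕ) : IsProbabilityMeasure (erMeasure n) := by
  unfold erMeasure; infer_instance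

theorem erMeasure_forall_eq (n : ℕ) (E : Finset (EdgeIdx n)) (b : Bool) :
    erMeasure n {ω | ∀ e ∈ E, ω e = b}
      = ((cond b (1/4) (3/4) : ℝ≥0) : ℝ≥0∞) ^ E.card := by
  change erMeasure n ((E : Set (EdgeIdx n)).pi fun _ => {b}) = _
  rw [erMeasure, Measure.pi_pi_finset,
    PMF.toMeasure_apply_singleton _ _ (measurableSet_singleton b), Finset.prod_const]
  congr 1
  cases b
  · change ((1 - 1/4 : ℝ≥0) : ℝ≥0∞) = ((3/4 : ℝ≥0) : ℝ≥0∞)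
    rw [ENNReal.coe_inj, ← NNReal.coe_inj, NNReal.coe_sub (by norm_num [div_le_one])]
    norm_num
  · rfl

theorem graphOf_adj_iff {n : ℕ} {ω : EdgeIdx n → Bool} {u w : Fin n} (e : EdgeIdx n)
    (he : e.1 = s(u, w)) : (graphOf ω).Adj u w ↔ ω e = true := by
  have huw : u ≠ w := fun h => e.2 (he ▸ Sym2.mk_isDiag_iff.mpr h)
  obtain rfl : (⟨s(u, w), fun hd => huw (Sym2.mk_isDiag_iff.mp hd)⟩ : EdgeIdx n) = e :=
    Subtype.ext he.symm
  exact ⟨fun ⟨_, h⟩ => h, fun h => ⟨huw, h⟩⟩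

theorem erMeasure_forall_adj_iff (n : ℕ) {A S : Finset (Fin n)} (hAS : Disjoint A S)
    (b : Bool) :
    erMeasure n {ω | ∀ u ∈ A, ∀ w ∈ S, ((graphOf ω).Adj u w ↔ b)}
      = ((cond b (1/4) (3/4) : ℝ≥0) : ℝ≥0∞) ^ (A.card * S.card) := by
  classical
  have hne : ∀ p ∈ A ×ˢ S, p.1 ≠ p.2 := fun p hp h =>
    Finset.disjoint_left.mp hAS (Finset.mem_product.mp hp).1 (h ▸ (Finset.mem_product.mp hp).2)
  set E := ((A ×ˢ S).image fun p => s(p.1, p.2)).subtype (fun e => ¬ e.IsDiag)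
  have hE : E.card = A.card * S.card := by
    rw [Finset.card_subtype, Finset.filter_true_of_mem, Finset.card_image_of_injOn,
      Finset.card_product]
    · rintro ⟨u, w⟩ huw ⟨u', w'⟩ huw' h
      rcases Sym2.eq_iff.mp h with ⟨rfl, rfl⟩ | ⟨rfl, rfl⟩
      · rfl
      · exact absurd (Finset.mem_product.mp huw').2 (Finset.disjoint_left.mp hAS
          (Finset.mem_product.mp huw).1)
    · simp only [Finset.mem_image]
      rintro _ ⟨p, hp, rfl⟩
      exact fun hd => hne p hp (Sym2.mk_isDiag_iff.mp hd)
  rw [← hE, ← erMeasure_forall_eq]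
  congr 1
  ext ω
  simp only [Set.mem_ofPred_eq, E, Finset.mem_subtype, Finset.mem_image, Finset.mem_product]
  constructor
  · rintro h e ⟨⟨u, w⟩, ⟨hu, hw⟩, he⟩
    rw [← Bool.coe_iff_coe, ← graphOf_adj_iff e he.symm]
    exact h u hu w hw
  · intro h u hu w hw
    have huw := hne (u, w) (Finset.mem_product.mpr ⟨hu, hw⟩)
    let e : EdgeIdx n := ⟨s(u, w), fun hd => huw (Sym2.mk_isDiag_iff.mp hd)⟩
    rw [graphOf_adj_iff e rfl, h e ⟨(u, w), ⟨hu, hw⟩, rfl⟩]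

theorem erMeasure_degree_lt_le (n : ℕ) (v : Fin n) :
    erMeasure n {ω | (((graphOf ω).neighborSet v).ncard : ℝ) < n / 5}
      ≤ ((11/8 : ℝ≥0) ^ (n - 1) * (2/3) ^ (4 * n / 5) : ℝ≥0) := by
  classical
  set R : (EdgeIdx n → Bool) → Finset (Fin n) := fun ω => (graphOf ω)ᶜ.neighborFinset v
  have hRU (ω) : R ω ⊆ Finset.univ.erase v := fun w hw => by
    simpa [R, eq_comm] using ((graphOf ω)ᶜ.mem_neighborFinset v w).mp hw |>.ne
  have hp : ∀ S ⊆ Finset.univ.erase v,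
      erMeasure n {ω | S ⊆ R ω} = ((3/4 : ℝ≥0) : ℝ≥0∞) ^ S.card := by
    intro S hS
    have hvS : v ∉ S := fun h => by simpa using hS h
    rw [show ((3/4 : ℝ≥0) : ℝ≥0∞) ^ S.card = ((cond false (1/4) (3/4) : ℝ≥0) : ℝ≥0∞) ^
      (({v} : Finset (Fin n)).card * S.card) by simp,
      ← erMeasure_forall_adj_iff n (Finset.disjoint_singleton_left.mpr hvS) false]
    congr 1
    ext ω
    simp only [Set.mem_ofPred_eq, Finset.mem_singleton, forall_eq, Bool.false_eq_true,
      iff_false, R, Finset.subset_iff, SimpleGraph.mem_neighborFinset, SimpleGraph.compl_adj]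
    exact forall₂_congr fun w hw => and_iff_right (ne_of_mem_of_not_mem hw hvS).symm
  have hsub : {ω | (((graphOf ω).neighborSet v).ncard : ℝ) < n / 5}
      ⊆ {ω | 4 * n / 5 ≤ (R ω).card} := by
    intro ω hω
    have hdeg : (graphOf ω).degree v * 5 < n := by
      rw [Set.mem_ofPred_eq, ← SimpleGraph.coe_neighborFinset, Set.ncard_coe_finset,
        SimpleGraph.card_neighborFinset_eq_degree, lt_div_iff₀ (by norm_num)] at hω
      exact_mod_cast hω
    simp only [Set.mem_ofPred_eq, R, SimpleGraph.card_neighborFinset_eq_degree,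
      SimpleGraph.degree_compl, Fintype.card_fin]
    omega
  have hconst : ((1 + 1/2 * (3/4) : ℝ≥0) = 11/8) ∧ ((1 + 1/2 : ℝ≥0)⁻¹ = 2/3) := by
    constructor <;> rw [← NNReal.coe_inj] <;> norm_num
  calc _ ≤ erMeasure n {ω | 4 * n / 5 ≤ (R ω).card} := measure_mono hsub
    _ ≤ _ := measure_card_ge_le hRU hp (1/2) _
    _ = _ := by rw [hconst.1, hconst.2, Finset.card_erase_of_mem (Finset.mem_univ v),
      Finset.card_univ, Fintype.card_fin]

theorem erMeasure_codegree_gt_le (n : ℕ) {x y : Fin n} (hxy : x ≠ y) :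
    erMeasure n {ω | (3 * n / 20 : ℝ) < ((graphOf ω).commonNeighbors x y).ncard}
      ≤ ((17/16 : ℝ≥0) ^ (n - 2) * (1/2) ^ ((3 * n + 19) / 20) : ℝ≥0) := by
  classical
  set R : (EdgeIdx n → Bool) → Finset (Fin n) :=
    fun ω => (graphOf ω).neighborFinset x ∩ (graphOf ω).neighborFinset y
  have hRU (ω) : R ω ⊆ {x, y}ᶜ := fun w hw => by
    simp only [R, Finset.mem_inter, SimpleGraph.mem_neighborFinset] at hw
    simpa [eq_comm] using ⟨hw.1.ne, hw.2.ne⟩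
  have hp : ∀ S ⊆ {x, y}ᶜ,
      erMeasure n {ω | S ⊆ R ω} = (((1/4) ^ 2 : ℝ≥0) : ℝ≥0∞) ^ S.card := by
    intro S hS
    have hdisj : Disjoint {x, y} S := Finset.disjoint_left.mpr fun u hu huS => by
      simpa using (Finset.mem_compl.mp (hS huS)) hu
    rw [show (((1/4) ^ 2 : ℝ≥0) : ℝ≥0∞) ^ S.card = ((cond true (1/4) (3/4) : ℝ≥0) : ℝ≥0∞) ^
      (({x, y} : Finset (Fin n)).card * S.card) by
        rw [Finset.card_pair hxy, pow_mul, ENNReal.coe_pow]; rfl,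
      ← erMeasure_forall_adj_iff n hdisj true]
    congr 1
    ext ω
    simp [R, Finset.subset_iff, forall_and]
  have hsub : {ω | (3 * n / 20 : ℝ) < ((graphOf ω).commonNeighbors x y).ncard}
      ⊆ {ω | (3 * n + 19) / 20 ≤ (R ω).card} := by
    intro ω hω
    have hcn : 3 * n < (R ω).card * 20 := by
      have hR : (graphOf ω).commonNeighbors x y = R ω := by
        ext; simp [R, SimpleGraph.mem_commonNeighbors]
      rw [Set.mem_ofPred_eq, hR, Set.ncard_coe_finset, div_lt_iff₀ (by norm_num)] at hω
      exact_mod_cast hω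
    simp only [Set.mem_ofPred_eq]
    omega
  have hconst : (1 + 1 * (1/4) ^ 2 : ℝ≥0) = 17/16 ∧ (1 + 1 : ℝ≥0)⁻¹ = 1/2 := by
    constructor <;> rw [← NNReal.coe_inj] <;> norm_num
  calc _ ≤ erMeasure n {ω | (3 * n + 19) / 20 ≤ (R ω).card} := measure_mono hsub
    _ ≤ _ := measure_card_ge_le hRU hp 1 _
    _ = _ := by
      rw [hconst.1, hconst.2, Finset.card_compl, Finset.card_pair hxy, Fintype.card_fin]

theorem erMeasure_exists_degree_lt_le (n : ℕ) :
    erMeasure n {ω | ∃ v, (((graphOf ω).neighborSet v).ncard : ℝ) < n / 5}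
      ≤ ((n * ((11/8) ^ (n - 1) * (2/3) ^ (4 * n / 5)) : ℝ≥0) : ℝ≥0∞) := by
  simpa using measure_setOf_exists_le (erMeasure n) (erMeasure_degree_lt_le n)

theorem erMeasure_exists_codegree_gt_le (n : ℕ) :
    erMeasure n
        {ω | ∃ x y, x ≠ y ∧ (3 * n / 20 : ℝ) < ((graphOf ω).commonNeighbors x y).ncard}
      ≤ ((n * (n * ((17/16) ^ (n - 2) * (1/2) ^ ((3 * n + 19) / 20))) : ℝ≥0) : ℝ≥0∞) := by
  have hpair (x y : Fin n) : erMeasure n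
      {ω | x ≠ y ∧ (3 * n / 20 : ℝ) < ((graphOf ω).commonNeighbors x y).ncard}
        ≤ ((17/16 : ℝ≥0) ^ (n - 2) * (1/2) ^ ((3 * n + 19) / 20) : ℝ≥0) := by
    by_cases hxy : x = y
    · simp [hxy]
    · exact (measure_mono fun ω hω => hω.2).trans (erMeasure_codegree_gt_le n hxy)
  simpa using measure_setOf_exists_le (erMeasure n) fun x =>
    measure_setOf_exists_le (erMeasure n) (hpair x)

theorem tendsto_degree_union_bound :
    Tendsto (fun n : ℕ => (n : ℝ≥0) * ((11/8) ^ (n - 1) * (2/3) ^ (4 * n / 5)))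
      atTop (𝓝 0) := by
  refine tendsto_nhds_zero_of_pow_le (L := 5) (k := 5) (C := (3/2) ^ 4)
    (r := (11/8) ^ 5 * (2/3) ^ 4) (by norm_num) (by norm_num) fun n => ?_
  have h1 : (11/8 : ℝ≥0) ^ (n - 1) ≤ (11/8) ^ n :=
    pow_le_pow_right₀ (by norm_num [le_div_iff₀]) (Nat.sub_le n 1)
  have h2 : (2/3 : ℝ≥0) ^ (5 * (4 * n / 5)) ≤ (3/2) ^ 4 * (2/3) ^ (4 * n) := calc
    (2/3 : ℝ≥0) ^ (5 * (4 * n / 5)) = (3/2) ^ 4 * (2/3) ^ (5 * (4 * n / 5) + 4) := by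
      rw [pow_add, ← mul_assoc, mul_comm _ ((2/3 : ℝ≥0) ^ 4), ← mul_assoc, ← mul_pow]; norm_num
    _ ≤ (3/2) ^ 4 * (2/3) ^ (4 * n) := by
      gcongr (3/2) ^ 4 * ?_
      exact pow_le_pow_of_le_one (by positivity) (by norm_num [div_le_one]) (by omega)
  calc ((n : ℝ≥0) * ((11/8 : ℝ≥0) ^ (n - 1) * (2/3) ^ (4 * n / 5))) ^ 5
      = (n : ℝ≥0) ^ 5 * ((11/8 : ℝ≥0) ^ (n - 1)) ^ 5 * (2/3 : ℝ≥0) ^ (5 * (4 * n / 5)) := by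
        ring
    _ ≤ (n : ℝ≥0) ^ 5 * ((11/8 : ℝ≥0) ^ n) ^ 5 * ((3/2) ^ 4 * (2/3) ^ (4 * n)) := by gcongr
    _ = (3/2) ^ 4 * (n : ℝ≥0) ^ 5 * ((11/8) ^ 5 * (2/3) ^ 4) ^ n := by
      simp only [mul_pow, ← pow_mul]; ring

theorem tendsto_codegree_union_bound :
    Tendsto (fun n : ℕ => (n : ℝ≥0) * (n * ((17/16) ^ (n - 2) * (1/2) ^ ((3 * n + 19) / 20))))
      atTop (𝓝 0) := by
  refine tendsto_nhds_zero_of_pow_le (L := 20) (k := 40) (C := 1)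
    (r := (17/16) ^ 20 * (1/2) ^ 3) (by norm_num) (by norm_num) fun n => ?_
  have h1 : (17/16 : ℝ≥0) ^ (n - 2) ≤ (17/16) ^ n :=
    pow_le_pow_right₀ (by norm_num [le_div_iff₀]) (Nat.sub_le n 2)
  have h2 : (1/2 : ℝ≥0) ^ (20 * ((3 * n + 19) / 20)) ≤ (1/2) ^ (3 * n) :=
    pow_le_pow_of_le_one (by positivity) (by norm_num [div_le_one]) (by omega)
  calc ((n : ℝ≥0) * (n * ((17/16 : ℝ≥0) ^ (n - 2) * (1/2) ^ ((3 * n + 19) / 20)))) ^ 20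
      = (n : ℝ≥0) ^ 40 * ((17/16 : ℝ≥0) ^ (n - 2)) ^ 20
          * (1/2 : ℝ≥0) ^ (20 * ((3 * n + 19) / 20)) := by ring
    _ ≤ (n : ℝ≥0) ^ 40 * ((17/16 : ℝ≥0) ^ n) ^ 20 * (1/2) ^ (3 * n) := by gcongr
    _ = 1 * (n : ℝ≥0) ^ 40 * ((17/16) ^ 20 * (1/2) ^ 3) ^ n := by
      simp only [mul_pow, ← pow_mul]; ring

theorem er_degree_codegree_automorphism_whp :
    Tendsto (fun n : ℕ => erMeasure n {ω : EdgeIdx n → Bool |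
      (∀ v : Fin n, (n / 5 : ℝ) ≤ ((graphOf ω).neighborSet v).ncard) ∧
      (∀ x y : Fin n, x ≠ y →
        (((graphOf ω).commonNeighbors x y).ncard : ℝ) ≤ 3 * n / 20) ∧
      (∀ f : Equiv.Perm (Fin n), f ≠ Equiv.refl (Fin n) →
        (∀ u v, (graphOf ω).Adj (f u) (f v) ↔ (graphOf ω).Adj u v) →
        (n / 20 : ℝ) ≤ ((Finset.univ.filter fun v : Fin n => f v ≠ v).card : ℝ))})
      atTop (nhds 1) := by
  refine tendsto_measure_nhds_one_of_compl (fun _ => MeasurableSet.of_discrete) ?_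
  have hbound := ENNReal.tendsto_coe.mpr
    (tendsto_degree_union_bound.add tendsto_codegree_union_bound)
  rw [add_zero, ENNReal.coe_zero] at hbound
  refine tendsto_of_tendsto_of_tendsto_of_le_of_le tendsto_const_nhds hbound
    (fun _ => zero_le) fun n => ?_
  refine (measure_mono ?_).trans <| (measure_union_le _ _).trans <|
    (add_le_add (erMeasure_exists_degree_lt_le n) (erMeasure_exists_codegree_gt_le n)).trans_eq
      (ENNReal.coe_add _ _).symm
  intro ω hω
  by_contra hbad
  simp only [Set.mem_union, Set.mem_ofPred_eq, not_or, not_exists, not_lt, not_and] at hbad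
  refine hω ⟨hbad.1, hbad.2, fun f hf hadj => ?_⟩
  obtain ⟨x, hx⟩ : ∃ x, f x ≠ x := not_forall.mp fun h => hf (Equiv.ext h)
  calc (n / 20 : ℝ) = n / 5 - 3 * n / 20 := by ring
    _ ≤ _ := SimpleGraph.sub_le_card_support hbad.1 hbad.2 ⟨f, hadj _ _⟩ hx
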